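/- arXiv:2101.04991 — 2 statements merged into one kernel-verified Lean document; each statement's English description precedes it below -/
import Mathlib

section
/- The third order mock theta function ν satisfies 1 + ν(q) = ₁φ₁(q²; −q; q²; −1), i.e., 1 + Σ_{n≥0} q^{n(n+1)}/(−q;q²)_{n+1} = Σ_{n≥0} (q²;q²)_n/((−q;q²)_n (q²;q²)_n) · (−1)^n · (−1)^n q^{n(n−1)} for |q|<1. -/
open Complex

/-- The q-Pochhammer symbol `(a;q)_n = ∏_{j=0}^{n-1} (1 - a q^j)`. -/
noncomputable def qPoch (a q : ℂ) (n : ℕ) : ℂ := ∏ j ∈ Finset.range n, (1 - a * q ^ j)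

/-
Specialising `₁φ₁(q²; −q; q²; −1)` termwise, the factors `(q²;q²)_n` cancel and the two signs
combine to `1`, leaving `Σ q^{n(n-1)} / (−q;q²)_n`. Splitting off the `n = 0` term (which is `1`)
and shifting the index gives `1 + ν(q)`. The only analytic input is that `ν` converges: the
Pochhammer denominators stay bounded below by `(1 - ‖q‖)^{n+1}`, which the numerator
`‖q‖^{n(n+1)}` beats.
-/

lemma one_sub_norm_le_norm_one_sub_mul_pow {a q : ℂ} (hq : ‖q‖ ≤ 1) (j : ℕ) :
    1 - ‖a‖ ≤ ‖1 - a * q ^ j‖ :=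
  calc 1 - ‖a‖ ≤ 1 - ‖a * q ^ j‖ := by
        rw [norm_mul, norm_pow]
        gcongr
        exact mul_le_of_le_one_right (norm_nonneg a) (pow_le_one₀ (norm_nonneg q) hq)
    _ ≤ ‖1 - a * q ^ j‖ := by simpa using norm_sub_norm_le (1 : ℂ) (a * q ^ j)

lemma one_sub_norm_pow_le_norm_qPoch {a q : ℂ} (ha : ‖a‖ ≤ 1) (hq : ‖q‖ ≤ 1) (n : ℕ) :
    (1 - ‖a‖) ^ n ≤ ‖qPoch a q n‖ := by
  rw [qPoch, norm_prod]
  simpa using Finset.prod_le_prod (s := Finset.range n) (fun _ _ => sub_nonneg.2 ha)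
    (fun j _ => one_sub_norm_le_norm_one_sub_mul_pow hq j)

lemma qPoch_ne_zero {a q : ℂ} (ha : ‖a‖ < 1) (hq : ‖q‖ ≤ 1) (n : ℕ) : qPoch a q n ≠ 0 := by
  have hpos : 0 < (1 - ‖a‖) ^ n := pow_pos (sub_pos.2 ha) n
  exact norm_pos_iff.1 (hpos.trans_le (one_sub_norm_pow_le_norm_qPoch ha.le hq n))

lemma summable_pow_mul_succ_div_qPoch {x a q : ℂ} (hx : ‖x‖ < 1) (ha : ‖a‖ < 1)
    (hq : ‖q‖ ≤ 1) :
    Summable fun n : ℕ => x ^ (n * (n + 1)) / qPoch a q (n + 1) := by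
  set c := 1 - ‖a‖
  have hc : 0 < c := sub_pos.2 ha
  have hsmall : ∀ᶠ n : ℕ in Filter.atTop, ‖x‖ ^ n / c ≤ 1 / 2 := by
    have h := (tendsto_pow_atTop_nhds_zero_of_lt_one (norm_nonneg x) hx).div_const c
    rw [zero_div] at h
    exact h.eventually (ge_mem_nhds (by norm_num))
  refine Summable.of_norm_bounded_eventually_nat
    (summable_geometric_of_lt_one (by norm_num) (by norm_num : (1 / 2 : ℝ) < 1)) ?_
  filter_upwards [hsmall] with n hn
  calc ‖x ^ (n * (n + 1)) / qPoch a q (n + 1)‖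
      ≤ ‖x‖ ^ (n * (n + 1)) / c ^ (n + 1) := by
        rw [norm_div, norm_pow]
        gcongr
        exact one_sub_norm_pow_le_norm_qPoch ha.le hq (n + 1)
    _ = (‖x‖ ^ n / c) ^ (n + 1) := by rw [div_pow, ← pow_mul]
    _ ≤ (1 / 2) ^ (n + 1) := by gcongr
    _ ≤ (1 / 2) ^ n := pow_le_pow_of_le_one (by norm_num) (by norm_num) n.le_succ

lemma div_mul_div_mul_neg_one_pow_mul_neg_one_pow {A B : ℂ} (hB : B ≠ 0) (n : ℕ) (x : ℂ) :
    B / (A * B) * (-1) ^ n * (-1) ^ n * x = x / A := by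
  rw [mul_assoc (B / (A * B)), ← mul_pow, neg_one_mul, neg_neg, one_pow, mul_one,
    mul_comm A, ← div_div, div_self hB, one_div, inv_mul_eq_div]

theorem nu_eq_onePhiOne_general (q : ℂ) (hq1 : ‖q‖ < 1) :
    1 + ∑' n : ℕ, q ^ (n * (n + 1)) / qPoch (-q) (q ^ 2) (n + 1)
      = ∑' n : ℕ, qPoch (q ^ 2) (q ^ 2) n /
          (qPoch (-q) (q ^ 2) n * qPoch (q ^ 2) (q ^ 2) n) *
          (-1 : ℂ) ^ n * (-1 : ℂ) ^ n * q ^ (n * (n - 1)) := by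
  have hq2 : ‖q ^ 2‖ < 1 := by rw [norm_pow]; exact pow_lt_one₀ (norm_nonneg q) hq1 two_ne_zero
  have hnu : Summable fun n : ℕ => q ^ (n * (n + 1)) / qPoch (-q) (q ^ 2) (n + 1) :=
    summable_pow_mul_succ_div_qPoch hq1 (by rwa [norm_neg]) hq2.le
  have hshift (n : ℕ) : (n + 1) * (n + 1 - 1) = n * (n + 1) := by
    rw [Nat.add_sub_cancel, Nat.mul_comm]
  simp_rw [div_mul_div_mul_neg_one_pow_mul_neg_one_pow (qPoch_ne_zero hq2 hq2.le _)]
  rw [tsum_eq_zero_add' (f := fun n => q ^ (n * (n - 1)) / qPoch (-q) (q ^ 2) n)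
    (by simpa only [hshift] using hnu)]
  simp only [hshift, qPoch, Finset.range_zero, Finset.prod_empty, zero_mul, pow_zero, div_one]

/-- `1 + ν(q) = ₁φ₁(q²; −q; q²; −1)`. -/
theorem nu_eq_onePhiOne (q : ℂ) (hq0 : 0 < ‖q‖) (hq1 : ‖q‖ < 1) :
    1 + ∑' n : ℕ, q ^ (n * (n + 1)) / qPoch (-q) (q ^ 2) (n + 1)
      = ∑' n : ℕ, qPoch (q ^ 2) (q ^ 2) n /
          (qPoch (-q) (q ^ 2) n * qPoch (q ^ 2) (q ^ 2) n) *
          (-1 : ℂ) ^ n * (-1 : ℂ) ^ n * q ^ (n * (n - 1)) :=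
  nu_eq_onePhiOne_general q hq1
end

section
/- Fine's recurrence: for |q|<1 and parameters a, b, t with all denominators nonzero, F(a,b;t;q) = b/(b−at) + (b−a)t/((1−bq)(b−at)) · F(a,bq;t;q), where F(a,b;t;q) = Σ_{n≥0} (aq;q)_n/(bq;q)_n · t^n. -/
open Complex

/-- Fine's function `F(a,b;t;q) = Σ_{n≥0} (aq;q)_n/(bq;q)_n · t^n`. -/
noncomputable def fineF (a b t q : ℂ) : ℂ :=
  ∑' n : ℕ, qPoch (a * q) q n / qPoch (b * q) q n * t ^ n

/-!
Both series converge by the ratio test, their term ratio tending to `t`. Writing `f n` and `g n`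
for the terms of `F(a,b;t;q)` and `F(a,bq;t;q)`, the identity
`b f (n+1) - a t f n = (b-a) t/(1-bq) · g n` sums, with `f 0 = 1`, to
`(b - a t) F(a,b;t;q) = b + (b-a) t/(1-bq) · F(a,bq;t;q)`.
-/

open Filter Topology

theorem summable_of_succ_eq_smul {𝕜 E : Type*} [NormedField 𝕜] [NormedAddCommGroup E]
    [NormedSpace 𝕜 E] [CompleteSpace E] {f : ℕ → E} {c : ℕ → 𝕜} {l : 𝕜}
    (hc : Tendsto c atTop (𝓝 l)) (hl : ‖l‖ < 1) (hf : ∀ n, f (n + 1) = c n • f n) :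
    Summable f := by
  obtain ⟨r, hlr, hr⟩ := exists_between hl
  refine summable_of_ratio_norm_eventually_le hr ?_
  filter_upwards [hc.norm.eventually_lt_const hlr] with n hn
  rw [hf, norm_smul]
  gcongr

theorem qPoch_succ (x q : ℂ) (n : ℕ) : qPoch x q (n + 1) = qPoch x q n * (1 - x * q ^ n) :=
  Finset.prod_range_succ _ _

theorem qPoch_succ' (x q : ℂ) (n : ℕ) : qPoch x q (n + 1) = (1 - x) * qPoch (x * q) q n := by
  simp only [qPoch, Finset.prod_range_succ', pow_succ, pow_zero, mul_one, mul_assoc, mul_comm q]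
  exact mul_comm _ _

theorem qPoch_ne_zero_s3 {x q : ℂ} (hx : ∀ j, 1 - x * q ^ j ≠ 0) (n : ℕ) : qPoch x q n ≠ 0 :=
  Finset.prod_ne_zero_iff.mpr fun j _ => hx j

noncomputable def fineTerm (a b t q : ℂ) (n : ℕ) : ℂ :=
  qPoch (a * q) q n / qPoch (b * q) q n * t ^ n

theorem fineF_eq_tsum (a b t q : ℂ) : fineF a b t q = ∑' n, fineTerm a b t q n := rfl

theorem fineTerm_zero (a b t q : ℂ) : fineTerm a b t q 0 = 1 := by
  simp [fineTerm, qPoch]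

theorem fineTerm_succ (a b t q : ℂ) (n : ℕ) :
    fineTerm a b t q (n + 1) =
      (1 - a * q * q ^ n) / (1 - b * q * q ^ n) * t * fineTerm a b t q n := by
  simp only [fineTerm, qPoch_succ, mul_div_mul_comm, pow_succ]
  ring

theorem summable_fineTerm (a b : ℂ) {t q : ℂ} (hq : ‖q‖ < 1) (ht : ‖t‖ < 1) :
    Summable (fineTerm a b t q) := by
  have hqn : Tendsto (fun n : ℕ => q ^ n) atTop (𝓝 0) :=
    tendsto_pow_atTop_nhds_zero_of_norm_lt_one hq
  have hratio : Tendsto (fun n : ℕ => (1 - a * q * q ^ n) / (1 - b * q * q ^ n) * t)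
      atTop (𝓝 ((1 - a * q * 0) / (1 - b * q * 0) * t)) :=
    ((tendsto_const_nhds.sub (hqn.const_mul _)).div
      (tendsto_const_nhds.sub (hqn.const_mul _)) (by simp)).mul_const t
  rw [mul_zero, mul_zero, sub_zero, div_one, one_mul] at hratio
  exact summable_of_succ_eq_smul hratio ht (fineTerm_succ a b t q)

theorem fineTerm_telescope {a b t q : ℂ} (hb : ∀ j, 1 - b * q * q ^ j ≠ 0) (n : ℕ) :
    b * fineTerm a b t q (n + 1) - a * t * fineTerm a b t q n =
      (b - a) * t / (1 - b * q) * fineTerm a (b * q) t q n := by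
  have hB : qPoch (b * q) q n ≠ 0 := qPoch_ne_zero_s3 hb n
  have hbq : 1 - b * q ≠ 0 := by simpa using hb 0
  have hC : qPoch (b * q * q) q n = qPoch (b * q) q n * (1 - b * q * q ^ n) / (1 - b * q) := by
    rw [← qPoch_succ, qPoch_succ', mul_div_cancel_left₀ _ hbq]
  rw [fineTerm_succ]
  simp only [fineTerm, hC]
  field_simp [hb n]
  ring

theorem sub_mul_fineF {a b t q : ℂ} (hq : ‖q‖ < 1) (ht : ‖t‖ < 1)
    (hb : ∀ j, 1 - b * q * q ^ j ≠ 0) :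
    (b - a * t) * fineF a b t q = b + (b - a) * t / (1 - b * q) * fineF a (b * q) t q := by
  have hf := summable_fineTerm a b hq ht
  rw [fineF_eq_tsum, fineF_eq_tsum]
  calc (b - a * t) * ∑' n, fineTerm a b t q n
      = b * fineTerm a b t q 0 +
          ∑' n, (b * fineTerm a b t q (n + 1) - a * t * fineTerm a b t q n) := by
        rw [((summable_nat_add_iff 1).mpr hf).mul_left b |>.tsum_sub (hf.mul_left (a * t)),
          tsum_mul_left, tsum_mul_left, hf.tsum_eq_zero_add]
        ring
    _ = b + (b - a) * t / (1 - b * q) * ∑' n, fineTerm a (b * q) t q n := by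
        rw [tsum_congr (fineTerm_telescope hb), tsum_mul_left, fineTerm_zero, mul_one]

theorem fine_recurrence_general (q a b t : ℂ) (hq1 : ‖q‖ < 1) (ht : ‖t‖ < 1)
    (hb : ∀ m : ℕ, 1 ≤ m → b * q ^ m ≠ 1) (hbt : b ≠ a * t) :
    fineF a b t q
      = b / (b - a * t) +
        (b - a) * t / ((1 - b * q) * (b - a * t)) * fineF a (b * q) t q := by
  have hb' : ∀ j : ℕ, 1 - b * q * q ^ j ≠ 0 := fun j h =>
    hb (j + 1) (by omega) (by rw [pow_succ']; linear_combination -h)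
  have hbq : 1 - b * q ≠ 0 := by simpa using hb' 0
  have hbt' : b - a * t ≠ 0 := sub_ne_zero.mpr hbt
  rw [← mul_right_inj' hbt', sub_mul_fineF hq1 ht hb']
  field_simp

/-- Fine's recurrence (4.4). -/
theorem fine_recurrence (q a b t : ℂ) (hq0 : 0 < ‖q‖) (hq1 : ‖q‖ < 1) (ht : ‖t‖ < 1)
    (hb : ∀ m : ℕ, 1 ≤ m → b * q ^ m ≠ 1) (hbt : b ≠ a * t) :
    fineF a b t q
      = b / (b - a * t) +
        (b - a) * t / ((1 - b * q) * (b - a * t)) * fineF a (b * q) t q :=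
  fine_recurrence_general q a b t hq1 ht hb hbt
end
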